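/- Let H be a cocommutative Hopf algebra over k, M a left-left SAYD module over H, and ψ: M → M⊗M a k-linear map satisfying ψ(h·m) = Δ(h)·ψ(m) for all h∈H, m∈M (where H⊗H acts componentwise on M⊗M). Then for each n the map ρₙ = Ωₙ∘(Δ^{⊗(n+1)}⊗ψ), which sends h₀⊗⋯⊗hₙ⊗m to (h₀⁽¹⁾⊗⋯⊗hₙ⁽¹⁾⊗m₍₁₎) ⊗ (h₀⁽²⁾⊗⋯⊗hₙ⁽²⁾⊗m₍₂₎), commutes with all the cyclic structure maps: ρ∘δᵢ = (δᵢ⊗δᵢ)∘ρ for all faces 0≤i≤n (including δₙ), ρ∘σᵢ = (σᵢ⊗σᵢ)∘ρ for all degeneracies, and ρ∘τₙ = (τₙ⊗τₙ)∘ρ; hence ρ defines a map of cyclic modules C̃(H,M) → C̃(H,M) × C̃(H,M). -/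

import Mathlib

/-!
Statement 10: Let `H` be a cocommutative Hopf algebra over a field `k` of
characteristic zero, `M` a left-left SAYD module over `H`, and `ψ : M → M ⊗ M` a
linear map satisfying `ψ(h·m) = Δ(h)·ψ(m)` (with `H ⊗ H` acting componentwise on
`M ⊗ M`).  Then for each `n` the map `ρₙ = Ωₙ ∘ (Δ^{⊗(n+1)} ⊗ ψ)`, sending
`h₀⊗⋯⊗hₙ⊗m` to `(h₀⁽¹⁾⊗⋯⊗hₙ⁽¹⁾⊗m₍₁₎) ⊗ (h₀⁽²⁾⊗⋯⊗hₙ⁽²⁾⊗m₍₂₎)`, commutes with all the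
cyclic structure maps: all faces (including the last face), all degeneracies, and the
cyclic operators; hence `ρ` defines a map of cyclic modules
`C̃(H,M) → C̃(H,M) × C̃(H,M)`.
-/

open TensorProduct

noncomputable section

namespace HopfCyclicStmt

variable (k : Type) [Field k]

/-! ### Iterated tensor powers and basic operations -/

section TP
variable (A : Type) [Ring A] [Algebra k A]

/-- Bundled iterated tensor powers of `A` over `k` (right-nested). -/
def TPobj : ℕ → ModuleCat k
  | 0 => ModuleCat.of k k
  | n + 1 => ModuleCat.of k (A ⊗[k] (TPobj n))

/-- `TP k A n` is the `n`-fold tensor power `A ⊗ ⋯ ⊗ A` of `A` over `k`,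
with `TP k A 0 = k` and `TP k A (n+1) = A ⊗ TP k A n`. -/
def TP (n : ℕ) : Type := TPobj k A n

instance (n : ℕ) : AddCommGroup (TP k A n) := inferInstanceAs (AddCommGroup (TPobj k A n))
instance (n : ℕ) : Module k (TP k A n) := inferInstanceAs (Module k (TPobj k A n))

/-- The pure tensor `h₁ ⊗ ⋯ ⊗ hₙ` as an element of `TP k A n`. -/
def tp : ∀ n, (Fin n → A) → TP k A n
  | 0, _ => (1 : k)
  | n + 1, f => f 0 ⊗ₜ[k] tp n (fun i => f i.succ)

/-- Transport along an equality of lengths. -/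
def castTP {m n : ℕ} (h : m = n) : TP k A m ≃ₗ[k] TP k A n :=
  h ▸ LinearEquiv.refl k (TP k A m)

/-- Multiply the `i`-th and `(i+1)`-st tensor factors (`0`-indexed). -/
def mulAt : ∀ (n : ℕ), Fin (n + 1) → (TP k A (n + 2) →ₗ[k] TP k A (n + 1))
  | n, ⟨0, _⟩ =>
      (LinearMap.rTensor (TP k A n) (LinearMap.mul' k A)
        ∘ₗ (TensorProduct.assoc k A A (TP k A n)).symm.toLinearMap :
          A ⊗[k] (A ⊗[k] TP k A n) →ₗ[k] A ⊗[k] TP k A n)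
  | n + 1, ⟨j + 1, h⟩ => LinearMap.lTensor A (mulAt n ⟨j, by omega⟩)
  | 0, ⟨j + 1, h⟩ => absurd h (by omega)

/-- Apply the counit `counitA` to the `i`-th tensor factor (`0`-indexed). -/
def dropAt (counitA : A →ₗ[k] k) : ∀ (n : ℕ), Fin (n + 1) → (TP k A (n + 1) →ₗ[k] TP k A n)
  | n, ⟨0, _⟩ =>
      (TensorProduct.lid k (TP k A n)).toLinearMap ∘ₗ LinearMap.rTensor (TP k A n) counitA
  | n + 1, ⟨j + 1, h⟩ => LinearMap.lTensor A (dropAt counitA n ⟨j, by omega⟩)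
  | 0, ⟨j + 1, h⟩ => absurd h (by omega)

/-- Apply the comultiplication `comulA` to the `i`-th tensor factor (`0`-indexed). -/
def comulAt (comulA : A →ₗ[k] A ⊗[k] A) : ∀ (n : ℕ), Fin n → (TP k A n →ₗ[k] TP k A (n + 1))
  | n + 1, ⟨0, _⟩ =>
      (TensorProduct.assoc k A A (TP k A n)).toLinearMap ∘ₗ LinearMap.rTensor (TP k A n) comulA
  | n + 2, ⟨j + 1, h⟩ => LinearMap.lTensor A (comulAt comulA (n + 1) ⟨j, by omega⟩)
  | 1, ⟨j + 1, h⟩ => absurd h (by omega)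
  | 0, i => absurd i.2 (by omega)

/-- Prepend a `1` in front: `x ↦ 1 ⊗ x`. -/
def cons1 (n : ℕ) : TP k A n →ₗ[k] TP k A (n + 1) := TensorProduct.mk k A (TP k A n) 1

/-- Append a tensor factor at the end. -/
def snoc : ∀ (n : ℕ), TP k A n ⊗[k] A →ₗ[k] TP k A (n + 1)
  | 0 => (TensorProduct.comm k k A).toLinearMap
  | n + 1 =>
      LinearMap.lTensor A (snoc n) ∘ₗ (TensorProduct.assoc k A (TP k A n) A).toLinearMap

/-- Append a `1` at the end: `x ↦ x ⊗ 1`. -/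
def snoc1 (n : ℕ) : TP k A n →ₗ[k] TP k A (n + 1) :=
  snoc k A n ∘ₗ (TensorProduct.mk k (TP k A n) A).flip 1

/-- Insert a `1` right after the `i`-th tensor factor. -/
def insertOneAt : ∀ (n : ℕ), Fin (n + 1) → (TP k A (n + 1) →ₗ[k] TP k A (n + 2))
  | n, ⟨0, _⟩ => LinearMap.lTensor A (cons1 k A n)
  | n + 1, ⟨j + 1, h⟩ => LinearMap.lTensor A (insertOneAt n ⟨j, by omega⟩)
  | 0, ⟨j + 1, h⟩ => absurd h (by omega)

/-- Pull the last tensor factor to the front. -/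
def lastSplit : ∀ (n : ℕ), TP k A (n + 1) →ₗ[k] A ⊗[k] TP k A n
  | 0 => LinearMap.id
  | n + 1 =>
      (TensorProduct.leftComm k A A (TP k A n)).toLinearMap
        ∘ₗ LinearMap.lTensor A (lastSplit n)

/-- Apply the counit to every factor. -/
def epsAll (counitA : A →ₗ[k] k) : ∀ (n : ℕ), TP k A n →ₗ[k] k
  | 0 => LinearMap.id
  | n + 1 =>
      (TensorProduct.lid k k).toLinearMap
        ∘ₗ TensorProduct.map counitA (epsAll counitA n)

/-- The diagonal (left) action of `A` on `TP k A (n+1)` with respect to the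
comultiplication `comulA`: `h · (h₀ ⊗ ⋯ ⊗ hₙ) = h⁽¹⁾h₀ ⊗ ⋯ ⊗ h⁽ⁿ⁺¹⁾hₙ`. -/
def diagTP (comulA : A →ₗ[k] A ⊗[k] A) : ∀ (n : ℕ), A ⊗[k] TP k A (n + 1) →ₗ[k] TP k A (n + 1)
  | 0 =>
      (LinearMap.rTensor k (LinearMap.mul' k A)
        ∘ₗ (TensorProduct.assoc k A A k).symm.toLinearMap :
          A ⊗[k] (A ⊗[k] k) →ₗ[k] A ⊗[k] k)
  | n + 1 =>
      TensorProduct.map (LinearMap.mul' k A) (diagTP comulA n)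
        ∘ₗ (TensorProduct.tensorTensorTensorComm k A A A (TP k A (n + 1))).toLinearMap
        ∘ₗ LinearMap.rTensor (A ⊗[k] TP k A (n + 1)) comulA

/-- The diagonal right coaction of `A` on `TP k A n`:
`h₀ ⊗ ⋯ ⊗ hₙ ↦ (h₀⁽¹⁾ ⊗ ⋯ ⊗ hₙ⁽¹⁾) ⊗ (h₀⁽²⁾ ⋯ hₙ⁽²⁾)`. -/
def codiagTP (comulA : A →ₗ[k] A ⊗[k] A) : ∀ (n : ℕ), TP k A n →ₗ[k] TP k A n ⊗[k] A
  | 0 => (TensorProduct.mk k (TP k A 0) A).flip 1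
  | n + 1 =>
      (LinearMap.lTensor (A ⊗[k] TP k A n) (LinearMap.mul' k A)
        ∘ₗ (TensorProduct.tensorTensorTensorComm k A A (TP k A n) A).toLinearMap
        ∘ₗ TensorProduct.map comulA (codiagTP comulA n) :
          TP k A (n + 1) →ₗ[k] (A ⊗[k] TP k A n) ⊗[k] A)

end TP

/-! ### Rearrangement of tensor powers of tensor products, and the diagonal -/

section Diag
variable (A B : Type) [Ring A] [Algebra k A] [Ring B] [Algebra k B]

/-- The rearrangement `(a₀⊗b₀) ⊗ ⋯ ⊗ (aₙ⊗bₙ) ↦ (a₀⊗⋯⊗aₙ) ⊗ (b₀⊗⋯⊗bₙ)`. -/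
def OmegaTP : ∀ (n : ℕ), TP k (A ⊗[k] B) n ≃ₗ[k] TP k A n ⊗[k] TP k B n
  | 0 => (TensorProduct.lid k k).symm
  | n + 1 =>
      (TensorProduct.congr (LinearEquiv.refl k (A ⊗[k] B)) (OmegaTP n)) ≪≫ₗ
        TensorProduct.tensorTensorTensorComm k A B (TP k A n) (TP k B n)

/-- Apply the comultiplication to every tensor factor:
`h₁ ⊗ ⋯ ⊗ hₙ ↦ (h₁⁽¹⁾⊗h₁⁽²⁾) ⊗ ⋯ ⊗ (hₙ⁽¹⁾⊗hₙ⁽²⁾)` in `TP k (A ⊗ A) n`. -/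
def TPdiag (comulA : A →ₗ[k] A ⊗[k] A) : ∀ (n : ℕ), TP k A n →ₗ[k] TP k (A ⊗[k] A) n
  | 0 => LinearMap.id
  | n + 1 => TensorProduct.map comulA (TPdiag comulA n)

end Diag

/-! ### Shuffles -/

section Shuffle
variable (A : Type) [Ring A] [Algebra k A]

/-- The subset of `Fin n` obtained from a subset of `Fin (n+1)` by removing `0`
and shifting down. -/
def tailSet {n : ℕ} (S : Finset (Fin (n + 1))) : Finset (Fin n) :=
  Finset.univ.filter (fun i : Fin n => i.succ ∈ S)

lemma tailSet_card_mem {n : ℕ} (S : Finset (Fin (n + 1))) (h : (0 : Fin (n + 1)) ∈ S) :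
    (tailSet S).card + 1 = S.card := by
  classical
  have h1 : S.card = ∑ x : Fin (n + 1), if x ∈ S then 1 else 0 := by
    rw [← Finset.card_filter]
    congr 1
    simp [Finset.filter_mem_eq_inter]
  rw [h1, Fin.sum_univ_succ, if_pos h]
  have h2 : (tailSet S).card = ∑ i : Fin n, if i.succ ∈ S then 1 else 0 := by
    rw [tailSet, Finset.card_filter]
  omega

lemma tailSet_card_not_mem {n : ℕ} (S : Finset (Fin (n + 1))) (h : (0 : Fin (n + 1)) ∉ S) :
    (tailSet S).card = S.card := by
  classical
  have h1 : S.card = ∑ x : Fin (n + 1), if x ∈ S then 1 else 0 := by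
    rw [← Finset.card_filter]
    congr 1
    simp [Finset.filter_mem_eq_inter]
  rw [h1, Fin.sum_univ_succ, if_neg h]
  have h2 : (tailSet S).card = ∑ i : Fin n, if i.succ ∈ S then 1 else 0 := by
    rw [tailSet, Finset.card_filter]
  omega

lemma tailSet_compl {n : ℕ} (S : Finset (Fin (n + 1))) :
    (tailSet S)ᶜ = tailSet Sᶜ := by
  classical
  ext i
  simp [tailSet]

lemma card_compl_eq {n p q : ℕ} (hpq : p + q = n) (S : Finset (Fin n)) (hS : S.card = p) :
    Sᶜ.card = q := by
  have h1 := Finset.card_compl S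
  have h2 := Finset.card_le_univ S
  simp only [Fintype.card_fin] at h1
  simp only [Finset.card_fin, Fintype.card_fin] at h2
  omega

/-- Split a tensor power according to a subset `S` of the positions: the factors in
positions belonging to `S` are collected (in order) into the first output, those in the
complementary positions into the second output. -/
def splitTP : ∀ (n : ℕ) (S : Finset (Fin n)), TP k A n →ₗ[k] TP k A S.card ⊗[k] TP k A Sᶜ.card
  | 0, S =>
      (TensorProduct.congr
          (castTP k A (show 0 = S.card by
            rw [Finset.eq_empty_of_isEmpty S, Finset.card_empty]))
          (castTP k A (show 0 = Sᶜ.card by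
            rw [Finset.eq_empty_of_isEmpty Sᶜ, Finset.card_empty]))).toLinearMap
        ∘ₗ (TensorProduct.lid k (TP k A 0)).symm.toLinearMap
  | n + 1, S =>
      if h0 : (0 : Fin (n + 1)) ∈ S then
        (TensorProduct.congr
            (castTP k A (by simpa using tailSet_card_mem S h0) :
                TP k A ((tailSet S).card + 1) ≃ₗ[k] TP k A S.card)
            (castTP k A (by
              rw [tailSet_compl]
              exact tailSet_card_not_mem Sᶜ (by simpa using h0)))).toLinearMap
          ∘ₗ (TensorProduct.assoc k A (TP k A (tailSet S).card)
                (TP k A (tailSet S)ᶜ.card)).symm.toLinearMap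
          ∘ₗ LinearMap.lTensor A (splitTP n (tailSet S))
      else
        (TensorProduct.congr
            (castTP k A (tailSet_card_not_mem S h0))
            (castTP k A (by
              rw [tailSet_compl]
              simpa using tailSet_card_mem Sᶜ (by simpa using h0)) :
                TP k A ((tailSet S)ᶜ.card + 1) ≃ₗ[k] TP k A Sᶜ.card)).toLinearMap
          ∘ₗ ((TensorProduct.leftComm k A (TP k A (tailSet S).card)
                (TP k A (tailSet S)ᶜ.card)).toLinearMap
          ∘ₗ LinearMap.lTensor A (splitTP n (tailSet S)) :
            A ⊗[k] TP k A n →ₗ[k]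
              TP k A (tailSet S).card ⊗[k] (A ⊗[k] TP k A (tailSet S)ᶜ.card))

/-- The sign of the `(p,q)`-shuffle associated to a subset `S ⊆ {0,…,n−1}` of
cardinality `p` (the shuffle placing the positions in `S` first, in order): the parity
of the number of pairs `(a, b) ∈ S × Sᶜ` with `b < a`. -/
def shuffleSign {n : ℕ} (S : Finset (Fin n)) : ℤ :=
  (-1) ^ (∑ a ∈ S, (Sᶜ.filter (· < a)).card)

/-- Keep the tensor factors in positions belonging to `S` (in order) and apply the
counit to all the other factors. -/
def keepTP (counitA : A →ₗ[k] k) (n : ℕ) (S : Finset (Fin n)) :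
    TP k A n →ₗ[k] TP k A S.card :=
  (TensorProduct.rid k (TP k A S.card)).toLinearMap
    ∘ₗ LinearMap.lTensor (TP k A S.card) (epsAll k A counitA Sᶜ.card)
    ∘ₗ splitTP k A n S

/-- The component `∪_{p,q} : A^{⊗n} → A^{⊗p} ⊗ A^{⊗q}` of the unshuffle coproduct:
`∪_{p,q}(h₁⊗⋯⊗hₙ) = Σ_σ sign(σ) (h_{σ(1)}⊗⋯⊗h_{σ(p)}) ⊗ (h_{σ(p+1)}⊗⋯⊗h_{σ(n)})`,
where `σ` runs over all `(p,q)`-shuffles. -/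
def cupTP (n p q : ℕ) (hpq : p + q = n) : TP k A n →ₗ[k] TP k A p ⊗[k] TP k A q :=
  ∑ S : {S : Finset (Fin n) // S.card = p},
    shuffleSign S.1 •
      ((TensorProduct.congr (castTP k A S.2)
          (castTP k A (card_compl_eq hpq S.1 S.2))).toLinearMap
        ∘ₗ splitTP k A n S.1)

/-- The shuffle map `sh_{p,q} : A^{⊗n} ⊗ A^{⊗n} → A^{⊗p} ⊗ A^{⊗q}` (for `p + q = n`):
the signed sum over all `(p,q)`-shuffles `σ` of the map applying the counit to the
factors in positions `σ(p+1),…,σ(n)` of the first copy and in positions `σ(1),…,σ(p)`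
of the second copy. -/
def shTP (counitA : A →ₗ[k] k) (n p q : ℕ) (hpq : p + q = n) :
    TP k A n ⊗[k] TP k A n →ₗ[k] TP k A p ⊗[k] TP k A q :=
  ∑ S : {S : Finset (Fin n) // S.card = p},
    shuffleSign S.1 •
      TensorProduct.map
        ((castTP k A S.2).toLinearMap ∘ₗ keepTP k A counitA n S.1)
        ((castTP k A (card_compl_eq hpq S.1 S.2)).toLinearMap ∘ₗ keepTP k A counitA n S.1ᶜ)

end Shuffle

/-! ### The Connes–Moscovici style cocyclic module `C^n(H, M) = M ⊗_H H^{⊗(n+1)}` -/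

section CMcochain
variable (A M : Type) [Ring A] [Algebra k A] [AddCommGroup M] [Module k M]

/-- The coface maps of the cocyclic module `C(H,M)` at the level of
`M ⊗ H^{⊗(n+1)}`: for `i ≤ n` the comultiplication is applied to the `i`-th factor,
and for `i = n+1` we take the flip-over coface
`m ⊗ h₀ ⊗ ⋯ ⊗ hₙ ↦ m⁽⁰⁾ ⊗ h₀⁽²⁾ ⊗ h₁ ⊗ ⋯ ⊗ hₙ ⊗ m⁽⁻¹⁾h₀⁽¹⁾`. -/
def cofaceCM (comulA : A →ₗ[k] A ⊗[k] A) (coact : M →ₗ[k] A ⊗[k] M) (n : ℕ)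
    (i : Fin (n + 2)) : M ⊗[k] TP k A (n + 1) →ₗ[k] M ⊗[k] TP k A (n + 2) :=
  if h : i.val ≤ n then
    LinearMap.lTensor M (comulAt k A comulA (n + 1) ⟨i.val, by omega⟩)
  else
    LinearMap.lTensor M
        (snoc k A (n + 1) ∘ₗ (TensorProduct.comm k A (TP k A (n + 1))).toLinearMap)
      ∘ₗ (TensorProduct.leftComm k A M (TP k A (n + 1))).toLinearMap
      ∘ₗ LinearMap.rTensor (M ⊗[k] TP k A (n + 1)) (LinearMap.mul' k A)
      ∘ₗ (TensorProduct.tensorTensorTensorComm k A M A (TP k A (n + 1))).toLinearMap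
      ∘ₗ (LinearMap.rTensor (TP k A (n + 2)) coact :
          M ⊗[k] TP k A (n + 2) →ₗ[k] (A ⊗[k] M) ⊗[k] (A ⊗[k] TP k A (n + 1)))
      ∘ₗ LinearMap.lTensor M (comulAt k A comulA (n + 1) ⟨0, by omega⟩)

/-- The codegeneracy maps of the cocyclic module `C(H,M)` at the level of
`M ⊗ H^{⊗(n+2)}`: `σᵢ` applies the counit to the `(i+1)`-st factor. -/
def codegenCM (counitA : A →ₗ[k] k) (n : ℕ) (i : Fin (n + 1)) :
    M ⊗[k] TP k A (n + 2) →ₗ[k] M ⊗[k] TP k A (n + 1) :=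
  LinearMap.lTensor M (dropAt k A counitA (n + 1) ⟨i.val + 1, by omega⟩)

/-- The cocyclic operator of `C(H,M)` at the level of `M ⊗ H^{⊗(n+1)}`:
`τₙ(m ⊗ h₀ ⊗ ⋯ ⊗ hₙ) = m⁽⁰⁾ ⊗ h₁ ⊗ ⋯ ⊗ hₙ ⊗ m⁽⁻¹⁾h₀`. -/
def tauCM (coact : M →ₗ[k] A ⊗[k] M) (n : ℕ) :
    M ⊗[k] TP k A (n + 1) →ₗ[k] M ⊗[k] TP k A (n + 1) :=
  LinearMap.lTensor M (snoc k A n ∘ₗ (TensorProduct.comm k A (TP k A n)).toLinearMap)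
    ∘ₗ (TensorProduct.leftComm k A M (TP k A n)).toLinearMap
    ∘ₗ LinearMap.rTensor (M ⊗[k] TP k A n) (LinearMap.mul' k A)
    ∘ₗ (TensorProduct.tensorTensorTensorComm k A M A (TP k A n)).toLinearMap
    ∘ₗ LinearMap.rTensor (TP k A (n + 1)) coact

/-- The relators defining `C^n(H, M) = M ⊗_H H^{⊗(n+1)}` as a quotient of
`M ⊗ H^{⊗(n+1)}`: the span of all `m·h ⊗ t − m ⊗ h·t`, where `h` acts diagonally
(through the comultiplication) on `t ∈ H^{⊗(n+1)}`. -/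
def cmRel (comulA : A →ₗ[k] A ⊗[k] A) (act : M →ₗ[k] A →ₗ[k] M) (n : ℕ) :
    Submodule k (M ⊗[k] TP k A (n + 1)) :=
  Submodule.span k {x | ∃ (m : M) (h : A) (t : TP k A (n + 1)),
    x = act m h ⊗ₜ[k] t - m ⊗ₜ[k] diagTP k A comulA n (h ⊗ₜ[k] t)}

/-- The Hopf-cyclic cochain space `C^n(H, M) = M ⊗_H H^{⊗(n+1)}`. -/
def CM (comulA : A →ₗ[k] A ⊗[k] A) (act : M →ₗ[k] A →ₗ[k] M) (n : ℕ) : Type :=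
  (M ⊗[k] TP k A (n + 1)) ⧸ cmRel k A M comulA act n

instance (comulA : A →ₗ[k] A ⊗[k] A) (act : M →ₗ[k] A →ₗ[k] M) (n : ℕ) :
    AddCommGroup (CM k A M comulA act n) :=
  inferInstanceAs (AddCommGroup ((M ⊗[k] TP k A (n + 1)) ⧸ cmRel k A M comulA act n))

instance (comulA : A →ₗ[k] A ⊗[k] A) (act : M →ₗ[k] A →ₗ[k] M) (n : ℕ) :
    Module k (CM k A M comulA act n) :=
  inferInstanceAs (Module k ((M ⊗[k] TP k A (n + 1)) ⧸ cmRel k A M comulA act n))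

/-- The canonical projection `M ⊗ H^{⊗(n+1)} → C^n(H,M)`. -/
def cmMk (comulA : A →ₗ[k] A ⊗[k] A) (act : M →ₗ[k] A →ₗ[k] M) (n : ℕ) :
    M ⊗[k] TP k A (n + 1) →ₗ[k] CM k A M comulA act n :=
  (cmRel k A M comulA act n).mkQ

end CMcochain

/-! ### The cyclic module `C̃ₙ(H,M)` (Hopf-cyclic homology) -/

section CyChain
variable (A M : Type) [Ring A] [Algebra k A] [AddCommGroup M] [Module k M]

/-- The cyclic operator `τₙ(h₀ ⊗ ⋯ ⊗ hₙ ⊗ m) = hₙ⁽¹⁾ ⊗ h₀ ⊗ ⋯ ⊗ h_{n-1} ⊗ hₙ⁽²⁾·m`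
at the level of `H^{⊗(n+1)} ⊗ M`. -/
def tauCy (comulA : A →ₗ[k] A ⊗[k] A) (act : A →ₗ[k] M →ₗ[k] M) (n : ℕ) :
    TP k A (n + 1) ⊗[k] M →ₗ[k] TP k A (n + 1) ⊗[k] M :=
  TensorProduct.map LinearMap.id (TensorProduct.lift act)
    ∘ₗ (TensorProduct.tensorTensorTensorComm k A A (TP k A n) M).toLinearMap
    ∘ₗ (TensorProduct.assoc k (A ⊗[k] A) (TP k A n) M).toLinearMap
    ∘ₗ LinearMap.rTensor M (LinearMap.rTensor (TP k A n) comulA)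
    ∘ₗ LinearMap.rTensor M (lastSplit k A n)

/-- The face maps of `C̃(H,M)` at the level of `H^{⊗(n+2)} ⊗ M`: for `i ≤ n`,
`δᵢ` multiplies the `i`-th and `(i+1)`-st factors; the last face is
`δ_{n+1}(h₀ ⊗ ⋯ ⊗ h_{n+1} ⊗ m) = h_{n+1}⁽¹⁾h₀ ⊗ h₁ ⊗ ⋯ ⊗ hₙ ⊗ h_{n+1}⁽²⁾·m`. -/
def faceCy (comulA : A →ₗ[k] A ⊗[k] A) (act : A →ₗ[k] M →ₗ[k] M) (n : ℕ)
    (i : Fin (n + 2)) : TP k A (n + 2) ⊗[k] M →ₗ[k] TP k A (n + 1) ⊗[k] M :=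
  if h : i.val ≤ n then
    LinearMap.rTensor M (mulAt k A n ⟨i.val, by omega⟩)
  else
    LinearMap.rTensor M (mulAt k A n ⟨0, by omega⟩)
      ∘ₗ tauCy k A M comulA act (n + 1)

/-- The degeneracy maps of `C̃(H,M)` at the level of `H^{⊗(n+1)} ⊗ M`: `σᵢ` inserts a
`1` after the `i`-th tensor factor. -/
def degenCy (n : ℕ) (i : Fin (n + 1)) :
    TP k A (n + 1) ⊗[k] M →ₗ[k] TP k A (n + 2) ⊗[k] M :=
  LinearMap.rTensor M (insertOneAt k A n i)

/-- The map whose kernel is the cotensor product `H^{⊗(n+1)} □_H M`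
(diagonal right coaction on `H^{⊗(n+1)}`, left coaction `coact` on `M`). -/
def cotensorMapCy (comulA : A →ₗ[k] A ⊗[k] A) (coact : M →ₗ[k] A ⊗[k] M) (n : ℕ) :
    TP k A (n + 1) ⊗[k] M →ₗ[k] TP k A (n + 1) ⊗[k] (A ⊗[k] M) :=
  (TensorProduct.assoc k (TP k A (n + 1)) A M).toLinearMap
      ∘ₗ LinearMap.rTensor M (codiagTP k A comulA (n + 1))
    - LinearMap.lTensor (TP k A (n + 1)) coact

/-- The cotensor product `C̃ₙ(H,M) = H^{⊗(n+1)} □_H M`, as a submodule of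
`H^{⊗(n+1)} ⊗ M`. -/
def cotensorCy (comulA : A →ₗ[k] A ⊗[k] A) (coact : M →ₗ[k] A ⊗[k] M) (n : ℕ) :
    Submodule k (TP k A (n + 1) ⊗[k] M) :=
  LinearMap.ker (cotensorMapCy k A M comulA coact n)

end CyChain

/-! ### (Stable) anti-Yetter–Drinfeld conditions -/

section AYD

variable (A M : Type) [Ring A] [Algebra k A] [AddCommGroup M] [Module k M]

/-- `M` is a right `A`-module via the bilinear map `act`. -/
def IsRightAction (act : M →ₗ[k] A →ₗ[k] M) : Prop :=
  (∀ m : M, act m 1 = m) ∧ ∀ (m : M) (a b : A), act (act m a) b = act m (a * b)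

/-- `M` is a left `A`-module via the bilinear map `act`. -/
def IsLeftAction (act : A →ₗ[k] M →ₗ[k] M) : Prop :=
  (∀ m : M, act 1 m = m) ∧ ∀ (a b : A) (m : M), act a (act b m) = act (a * b) m

/-- `coact` makes `M` a left `A`-comodule, with respect to the comultiplication `comulA`
and counit `counitA`. -/
def IsLeftCoaction (comulA : A →ₗ[k] A ⊗[k] A) (counitA : A →ₗ[k] k)
    (coact : M →ₗ[k] A ⊗[k] M) : Prop :=
  (LinearMap.rTensor M comulA ∘ₗ coact
      = (TensorProduct.assoc k A A M).symm.toLinearMap ∘ₗ LinearMap.lTensor A coact ∘ₗ coact)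
  ∧ ∀ m : M, (TensorProduct.lid k M) (LinearMap.rTensor M counitA (coact m)) = m

/-- The iterated comultiplication `h ↦ h⁽¹⁾ ⊗ (h⁽²⁾ ⊗ h⁽³⁾)`. -/
def comul₂ (comulA : A →ₗ[k] A ⊗[k] A) : A →ₗ[k] A ⊗[k] (A ⊗[k] A) :=
  LinearMap.lTensor A comulA ∘ₗ comulA

/-- The linear map `(a ⊗ m) ⊗ (h₁ ⊗ (h₂ ⊗ h₃)) ↦ (S(h₃) * a * h₁) ⊗ (m · h₂)`,
the right-hand side of the (right-module, left-comodule) anti-Yetter–Drinfeld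
condition. -/
def aydRHS (antipodeA : A →ₗ[k] A) (act : M →ₗ[k] A →ₗ[k] M) :
    (A ⊗[k] M) ⊗[k] (A ⊗[k] (A ⊗[k] A)) →ₗ[k] A ⊗[k] M :=
  TensorProduct.map (LinearMap.mul' k A ∘ₗ LinearMap.lTensor A (LinearMap.mul' k A))
      (TensorProduct.lift act)
    ∘ₗ (TensorProduct.assoc k A (A ⊗[k] A) (M ⊗[k] A)).symm.toLinearMap
    ∘ₗ (TensorProduct.leftComm k (A ⊗[k] A) A (M ⊗[k] A)).toLinearMap
    ∘ₗ LinearMap.lTensor (A ⊗[k] A)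
        ((TensorProduct.leftComm k M A A).toLinearMap
          ∘ₗ LinearMap.lTensor M (TensorProduct.comm k A A).toLinearMap)
    ∘ₗ (TensorProduct.tensorTensorTensorComm k A M A (A ⊗[k] A)).toLinearMap
    ∘ₗ LinearMap.lTensor (A ⊗[k] M) (LinearMap.lTensor A (LinearMap.lTensor A antipodeA))

/-- The anti-Yetter–Drinfeld compatibility condition
`φ(m·h) = S(h⁽³⁾) m⁽⁻¹⁾ h⁽¹⁾ ⊗ m⁽⁰⁾·h⁽²⁾`, written without Sweedler notation. -/
def IsAYD (comulA : A →ₗ[k] A ⊗[k] A) (antipodeA : A →ₗ[k] A)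
    (act : M →ₗ[k] A →ₗ[k] M) (coact : M →ₗ[k] A ⊗[k] M) : Prop :=
  ∀ (m : M) (h : A),
    coact (act m h) = aydRHS k A M antipodeA act (coact m ⊗ₜ[k] comul₂ k A comulA h)

/-- The stability condition `m⁽⁰⁾ · m⁽⁻¹⁾ = m` for a right module, left comodule. -/
def IsStable (act : M →ₗ[k] A →ₗ[k] M) (coact : M →ₗ[k] A ⊗[k] M) : Prop :=
  ∀ m : M, TensorProduct.lift act (TensorProduct.comm k A M (coact m)) = m

/-- The linear map `(h₁ ⊗ (h₂ ⊗ h₃)) ⊗ (a ⊗ m) ↦ (h₁ * a * S(h₃)) ⊗ (h₂ · m)`,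
the right-hand side of the left-left anti-Yetter–Drinfeld condition. -/
def llAydRHS (antipodeA : A →ₗ[k] A) (act : A →ₗ[k] M →ₗ[k] M) :
    (A ⊗[k] (A ⊗[k] A)) ⊗[k] (A ⊗[k] M) →ₗ[k] A ⊗[k] M :=
  TensorProduct.map (LinearMap.mul' k A) (TensorProduct.lift act)
    ∘ₗ (TensorProduct.tensorTensorTensorComm k A A A M).toLinearMap
    ∘ₗ LinearMap.rTensor (A ⊗[k] M)
        ((TensorProduct.comm k A A).toLinearMap
          ∘ₗ LinearMap.lTensor A (LinearMap.mul' k A)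
          ∘ₗ (TensorProduct.assoc k A A A).toLinearMap
          ∘ₗ LinearMap.rTensor A (TensorProduct.comm k A A).toLinearMap)
    ∘ₗ (TensorProduct.tensorTensorTensorComm k (A ⊗[k] A) A A M).toLinearMap
    ∘ₗ LinearMap.rTensor (A ⊗[k] M) (TensorProduct.assoc k A A A).symm.toLinearMap
    ∘ₗ LinearMap.rTensor (A ⊗[k] M) (LinearMap.lTensor A (LinearMap.lTensor A antipodeA))

/-- The left-left anti-Yetter–Drinfeld condition
`φ(h·m) = h⁽¹⁾ m⁽⁻¹⁾ S(h⁽³⁾) ⊗ h⁽²⁾·m⁽⁰⁾`. -/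
def IsLLAYD (comulA : A →ₗ[k] A ⊗[k] A) (antipodeA : A →ₗ[k] A)
    (act : A →ₗ[k] M →ₗ[k] M) (coact : M →ₗ[k] A ⊗[k] M) : Prop :=
  ∀ (h : A) (m : M),
    coact (act h m) = llAydRHS k A M antipodeA act (comul₂ k A comulA h ⊗ₜ[k] coact m)

/-- The stability condition `m⁽⁻¹⁾ · m⁽⁰⁾ = m` for a left module, left comodule. -/
def IsLLStable (act : A →ₗ[k] M →ₗ[k] M) (coact : M →ₗ[k] A ⊗[k] M) : Prop :=
  ∀ m : M, TensorProduct.lift act (coact m) = m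

end AYD

/-! ### Tensor products of (co)module structures -/

section TensorStructures

variable (A B M N : Type) [Ring A] [Algebra k A] [Ring B] [Algebra k B]
variable [AddCommGroup M] [Module k M] [AddCommGroup N] [Module k N]

/-- The componentwise right action of `A ⊗ B` on `M ⊗ N`. -/
def tensorAct (actM : M →ₗ[k] A →ₗ[k] M) (actN : N →ₗ[k] B →ₗ[k] N) :
    M ⊗[k] N →ₗ[k] (A ⊗[k] B) →ₗ[k] M ⊗[k] N :=
  TensorProduct.curry
    (TensorProduct.map (TensorProduct.lift actM) (TensorProduct.lift actN)
      ∘ₗ (TensorProduct.tensorTensorTensorComm k M N A B).toLinearMap)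

/-- The componentwise left action of `A ⊗ B` on `M ⊗ N`. -/
def tensorLAct (actM : A →ₗ[k] M →ₗ[k] M) (actN : B →ₗ[k] N →ₗ[k] N) :
    (A ⊗[k] B) →ₗ[k] M ⊗[k] N →ₗ[k] M ⊗[k] N :=
  TensorProduct.curry
    (TensorProduct.map (TensorProduct.lift actM) (TensorProduct.lift actN)
      ∘ₗ (TensorProduct.tensorTensorTensorComm k A B M N).toLinearMap)

/-- The coaction `m ⊗ n ↦ (m⁽⁻¹⁾ ⊗ n⁽⁻¹⁾) ⊗ (m⁽⁰⁾ ⊗ n⁽⁰⁾)` of `A ⊗ B` on `M ⊗ N`. -/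
def tensorCoact (coactM : M →ₗ[k] A ⊗[k] M) (coactN : N →ₗ[k] B ⊗[k] N) :
    M ⊗[k] N →ₗ[k] (A ⊗[k] B) ⊗[k] (M ⊗[k] N) :=
  (TensorProduct.tensorTensorTensorComm k A M B N).toLinearMap
    ∘ₗ TensorProduct.map coactM coactN

/-- The comultiplication `(a ⊗ b) ↦ (a⁽¹⁾ ⊗ b⁽¹⁾) ⊗ (a⁽²⁾ ⊗ b⁽²⁾)` of a tensor product. -/
def tensorComul (comulA : A →ₗ[k] A ⊗[k] A) (comulB : B →ₗ[k] B ⊗[k] B) :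
    (A ⊗[k] B) →ₗ[k] (A ⊗[k] B) ⊗[k] (A ⊗[k] B) :=
  (TensorProduct.tensorTensorTensorComm k A A B B).toLinearMap
    ∘ₗ TensorProduct.map comulA comulB

/-- The antipode `S ⊗ S` of a tensor product. -/
def tensorAntipode (antipodeA : A →ₗ[k] A) (antipodeB : B →ₗ[k] B) :
    (A ⊗[k] B) →ₗ[k] A ⊗[k] B :=
  TensorProduct.map antipodeA antipodeB

/-- The rearrangement
`(m ⊗ n) ⊗ ((a₀⊗b₀) ⊗ ⋯ ⊗ (aₙ⊗bₙ)) ↦ (m ⊗ a₀⊗⋯⊗aₙ) ⊗ (n ⊗ b₀⊗⋯⊗bₙ)`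
identifying the underlying space of `C^n(A ⊗ B, M ⊗ N)` with the tensor product of
those of `C^n(A, M)` and `C^n(B, N)`. -/
def OmegaCM (n : ℕ) :
    (M ⊗[k] N) ⊗[k] TP k (A ⊗[k] B) (n + 1) ≃ₗ[k]
      (M ⊗[k] TP k A (n + 1)) ⊗[k] (N ⊗[k] TP k B (n + 1)) :=
  TensorProduct.congr (LinearEquiv.refl k (M ⊗[k] N)) (OmegaTP k A B (n + 1)) ≪≫ₗ
    TensorProduct.tensorTensorTensorComm k M N (TP k A (n + 1)) (TP k B (n + 1))

/-- The rearrangement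
`((a₀⊗b₀) ⊗ ⋯ ⊗ (aₙ⊗bₙ)) ⊗ (m ⊗ n) ↦ (a₀⊗⋯⊗aₙ ⊗ m) ⊗ (b₀⊗⋯⊗bₙ ⊗ n)`
identifying the underlying space of `C̃ₙ(A ⊗ B, M ⊗ N)` with the tensor product of
those of `C̃ₙ(A, M)` and `C̃ₙ(B, N)`. -/
def OmegaCy (n : ℕ) :
    TP k (A ⊗[k] B) (n + 1) ⊗[k] (M ⊗[k] N) ≃ₗ[k]
      (TP k A (n + 1) ⊗[k] M) ⊗[k] (TP k B (n + 1) ⊗[k] N) :=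
  TensorProduct.congr (OmegaTP k A B (n + 1)) (LinearEquiv.refl k (M ⊗[k] N)) ≪≫ₗ
    TensorProduct.tensorTensorTensorComm k (TP k A (n + 1)) (TP k B (n + 1)) M N

end TensorStructures

end HopfCyclicStmt



open HopfCyclicStmt

variable (k : Type) [Field k] [CharZero k]
variable (H M : Type) [Ring H] [HopfAlgebra k H] [AddCommGroup M] [Module k M]

/-- The chain-level map
`ρₙ(h₀⊗⋯⊗hₙ⊗m) = (h₀⁽¹⁾⊗⋯⊗hₙ⁽¹⁾⊗m₍₁₎) ⊗ (h₀⁽²⁾⊗⋯⊗hₙ⁽²⁾⊗m₍₂₎)` on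
`H^{⊗(n+1)} ⊗ M`, i.e. `Ωₙ ∘ (Δ^{⊗(n+1)} ⊗ ψ)`. -/
def rhoPreCy (ψ : M →ₗ[k] M ⊗[k] M) (n : ℕ) :
    TP k H (n + 1) ⊗[k] M →ₗ[k] (TP k H (n + 1) ⊗[k] M) ⊗[k] (TP k H (n + 1) ⊗[k] M) :=
  (OmegaCy k H H M M n).toLinearMap
    ∘ₗ TensorProduct.map (TPdiag k H (Coalgebra.comul) (n + 1)) ψ

/-
Call a linear map `f : X → Y` between modules carrying "comultiplications" `δ` comultiplicative
(`PreservesComul`) if `δ ∘ f = (f ⊗ f) ∘ δ`. The map `ρₙ` is the comultiplication of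
`H^{⊗(n+1)} ⊗ M` built from `Δ` on every tensor factor and `ψ` on `M`, so each claim says that a
structure map of `C̃(H,M)` is comultiplicative. Comultiplicative maps are closed under composition
and under tensoring with identities, and every symmetric monoidal rearrangement is
comultiplicative. Multiplication and the unit of `H` are comultiplicative because `H` is a
bialgebra, the action `H ⊗ M → M` is by the hypothesis on `ψ`, and `Δ` itself is because `H` is
cocommutative. Every face, degeneracy and cyclic operator is a composite of such maps.
-/

open LinearMap (lTensor rTensor)

section ComulTensor

variable {R A B X Y Z : Type*} [CommSemiring R]
  [AddCommMonoid A] [Module R A] [AddCommMonoid B] [Module R B]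
  [AddCommMonoid X] [Module R X] [AddCommMonoid Y] [Module R Y] [AddCommMonoid Z] [Module R Z]

def comulTensor (δX : X →ₗ[R] X ⊗[R] X) (δY : Y →ₗ[R] Y ⊗[R] Y) :
    X ⊗[R] Y →ₗ[R] (X ⊗[R] Y) ⊗[R] (X ⊗[R] Y) :=
  (tensorTensorTensorComm R X X Y Y).toLinearMap ∘ₗ map δX δY

@[simp]
lemma comulTensor_tmul (δX : X →ₗ[R] X ⊗[R] X) (δY : Y →ₗ[R] Y ⊗[R] Y) (x : X) (y : Y) :
    comulTensor δX δY (x ⊗ₜ y) = tensorTensorTensorComm R X X Y Y (δX x ⊗ₜ δY y) := rfl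

def PreservesComul (δX : X →ₗ[R] X ⊗[R] X) (δY : Y →ₗ[R] Y ⊗[R] Y) (f : X →ₗ[R] Y) : Prop :=
  δY ∘ₗ f = map f f ∘ₗ δX

variable {δA : A →ₗ[R] A ⊗[R] A} {δB : B →ₗ[R] B ⊗[R] B} {δX : X →ₗ[R] X ⊗[R] X}
  {δY : Y →ₗ[R] Y ⊗[R] Y} {δZ : Z →ₗ[R] Z ⊗[R] Z}

lemma PreservesComul.comp {g : Y →ₗ[R] Z} {f : X →ₗ[R] Y}
    (hg : PreservesComul δY δZ g) (hf : PreservesComul δX δY f) :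
    PreservesComul δX δZ (g ∘ₗ f) := by
  rw [PreservesComul, ← LinearMap.comp_assoc, hg, LinearMap.comp_assoc, hf,
    ← LinearMap.comp_assoc, map_comp]

lemma PreservesComul.id : PreservesComul δX δX LinearMap.id := by
  simp [PreservesComul]

lemma PreservesComul.map {X' Y' : Type*} [AddCommMonoid X'] [Module R X'] [AddCommMonoid Y']
    [Module R Y'] {δX' : X' →ₗ[R] X' ⊗[R] X'} {δY' : Y' →ₗ[R] Y' ⊗[R] Y'}
    {f : X →ₗ[R] Y} {g : X' →ₗ[R] Y'} (hf : PreservesComul δX δY f)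
    (hg : PreservesComul δX' δY' g) :
    PreservesComul (comulTensor δX δX') (comulTensor δY δY') (map f g) := by
  rw [PreservesComul, comulTensor, comulTensor, LinearMap.comp_assoc, ← map_comp, hf, hg,
    map_comp, ← LinearMap.comp_assoc, tensorTensorTensorComm_comp_map, LinearMap.comp_assoc]

lemma PreservesComul.lTensor {f : X →ₗ[R] Y} (hf : PreservesComul δX δY f) :
    PreservesComul (comulTensor δA δX) (comulTensor δA δY) (lTensor A f) :=
  PreservesComul.id.map hf

lemma PreservesComul.rTensor {f : X →ₗ[R] Y} (hf : PreservesComul δX δY f) :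
    PreservesComul (comulTensor δX δA) (comulTensor δY δA) (rTensor A f) :=
  hf.map PreservesComul.id

lemma preservesComul_leftComm :
    PreservesComul (comulTensor δA (comulTensor δB δX)) (comulTensor δB (comulTensor δA δX))
      (TensorProduct.leftComm R A B X).toLinearMap := by
  have coherence : (tensorTensorTensorComm R B B (A ⊗[R] X) (A ⊗[R] X)).toLinearMap
        ∘ₗ lTensor (B ⊗[R] B) (tensorTensorTensorComm R A A X X).toLinearMap
        ∘ₗ (leftComm R (A ⊗[R] A) (B ⊗[R] B) (X ⊗[R] X)).toLinearMap
      = map (leftComm R A B X).toLinearMap (leftComm R A B X).toLinearMap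
        ∘ₗ (tensorTensorTensorComm R A A (B ⊗[R] X) (B ⊗[R] X)).toLinearMap
        ∘ₗ lTensor (A ⊗[R] A) (tensorTensorTensorComm R B B X X).toLinearMap := by
    ext; rfl
  ext a b x
  exact LinearMap.congr_fun coherence (δA a ⊗ₜ (δB b ⊗ₜ δX x))

lemma preservesComul_assoc :
    PreservesComul (comulTensor (comulTensor δA δB) δX) (comulTensor δA (comulTensor δB δX))
      (TensorProduct.assoc R A B X).toLinearMap := by
  have coherence : (tensorTensorTensorComm R A A (B ⊗[R] X) (B ⊗[R] X)).toLinearMap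
        ∘ₗ lTensor (A ⊗[R] A) (tensorTensorTensorComm R B B X X).toLinearMap
        ∘ₗ (TensorProduct.assoc R (A ⊗[R] A) (B ⊗[R] B) (X ⊗[R] X)).toLinearMap
      = map (TensorProduct.assoc R A B X).toLinearMap (TensorProduct.assoc R A B X).toLinearMap
        ∘ₗ (tensorTensorTensorComm R (A ⊗[R] B) (A ⊗[R] B) X X).toLinearMap
        ∘ₗ rTensor (X ⊗[R] X) (tensorTensorTensorComm R A A B B).toLinearMap := by
    ext; rfl
  ext a b x
  exact LinearMap.congr_fun coherence ((δA a ⊗ₜ δB b) ⊗ₜ δX x)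

lemma preservesComul_tensorTensorTensorComm :
    PreservesComul (comulTensor (comulTensor δA δB) (comulTensor δX δY))
      (comulTensor (comulTensor δA δX) (comulTensor δB δY))
      (tensorTensorTensorComm R A B X Y).toLinearMap := by
  have coherence : (tensorTensorTensorComm R (A ⊗[R] X) (A ⊗[R] X) (B ⊗[R] Y) (B ⊗[R] Y)).toLinearMap
        ∘ₗ map (tensorTensorTensorComm R A A X X).toLinearMap
          (tensorTensorTensorComm R B B Y Y).toLinearMap
        ∘ₗ (tensorTensorTensorComm R (A ⊗[R] A) (B ⊗[R] B) (X ⊗[R] X) (Y ⊗[R] Y)).toLinearMap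
      = map (tensorTensorTensorComm R A B X Y).toLinearMap
          (tensorTensorTensorComm R A B X Y).toLinearMap
        ∘ₗ (tensorTensorTensorComm R (A ⊗[R] B) (A ⊗[R] B) (X ⊗[R] Y) (X ⊗[R] Y)).toLinearMap
        ∘ₗ map (tensorTensorTensorComm R A A B B).toLinearMap
          (tensorTensorTensorComm R X X Y Y).toLinearMap := by
    ext; rfl
  ext a b x y
  exact LinearMap.congr_fun coherence ((δA a ⊗ₜ δB b) ⊗ₜ (δX x ⊗ₜ δY y))

end ComulTensor

lemma Coalgebra.preservesComul_comul {R C : Type*} [CommSemiring R] [AddCommMonoid C] [Module R C]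
    [Coalgebra R C] [Coalgebra.IsCocomm R C] :
    PreservesComul (Coalgebra.comul (R := R) (A := C))
      (comulTensor Coalgebra.comul Coalgebra.comul) Coalgebra.comul :=
  (Coalgebra.comulCoalgHom R C).map_comp_comul.symm

section BialgebraTensor

variable {R A X : Type*} [CommSemiring R] [Semiring A] [Bialgebra R A]
  [AddCommMonoid X] [Module R X] {δX : X →ₗ[R] X ⊗[R] X}

lemma preservesComul_mulFront :
    PreservesComul (comulTensor Coalgebra.comul (comulTensor Coalgebra.comul δX))
      (comulTensor Coalgebra.comul δX)
      (rTensor X (LinearMap.mul' R A) ∘ₗ (TensorProduct.assoc R A A X).symm.toLinearMap) := by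
  have coherence : (tensorTensorTensorComm R A A X X).toLinearMap
        ∘ₗ rTensor (X ⊗[R] X) (LinearMap.mul' R (A ⊗[R] A))
        ∘ₗ (TensorProduct.assoc R (A ⊗[R] A) (A ⊗[R] A) (X ⊗[R] X)).symm.toLinearMap
      = map (rTensor X (LinearMap.mul' R A) ∘ₗ (TensorProduct.assoc R A A X).symm.toLinearMap)
          (rTensor X (LinearMap.mul' R A) ∘ₗ (TensorProduct.assoc R A A X).symm.toLinearMap)
        ∘ₗ (tensorTensorTensorComm R A A (A ⊗[R] X) (A ⊗[R] X)).toLinearMap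
        ∘ₗ lTensor (A ⊗[R] A) (tensorTensorTensorComm R A A X X).toLinearMap := by
    ext; simp
  ext a b x
  have := LinearMap.congr_fun coherence (Coalgebra.comul a ⊗ₜ (Coalgebra.comul b ⊗ₜ δX x))
  simpa [Bialgebra.comul_mul] using this

lemma preservesComul_mk_one :
    PreservesComul δX (comulTensor Coalgebra.comul δX) (TensorProduct.mk R A X 1) := by
  have coherence : (tensorTensorTensorComm R A A X X).toLinearMap
        ∘ₗ TensorProduct.mk R (A ⊗[R] A) (X ⊗[R] X) (1 ⊗ₜ 1)
      = map (TensorProduct.mk R A X 1) (TensorProduct.mk R A X 1) := by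
    ext; rfl
  ext x
  simpa [Algebra.TensorProduct.one_def] using LinearMap.congr_fun coherence (δX x)

end BialgebraTensor

section CocommutativeAction

variable {R C X M : Type*} [CommSemiring R] [AddCommMonoid C] [Module R C] [Coalgebra R C]
  [AddCommMonoid X] [Module R X] [AddCommMonoid M] [Module R M]

/-- `(c ⊗ x) ⊗ m ↦ (c⁽¹⁾ ⊗ x) ⊗ c⁽²⁾·m`. -/
def tauFront (act : C →ₗ[R] M →ₗ[R] M) : (C ⊗[R] X) ⊗[R] M →ₗ[R] (C ⊗[R] X) ⊗[R] M :=
  map LinearMap.id (lift act) ∘ₗ (tensorTensorTensorComm R C C X M).toLinearMap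
    ∘ₗ (TensorProduct.assoc R (C ⊗[R] C) X M).toLinearMap ∘ₗ rTensor M (rTensor X Coalgebra.comul)

lemma preservesComul_tauFront [Coalgebra.IsCocomm R C] {act : C →ₗ[R] M →ₗ[R] M}
    {δX : X →ₗ[R] X ⊗[R] X} {ψ : M →ₗ[R] M ⊗[R] M}
    (hact : PreservesComul (comulTensor Coalgebra.comul ψ) ψ (lift act)) :
    PreservesComul (comulTensor (comulTensor Coalgebra.comul δX) ψ)
      (comulTensor (comulTensor Coalgebra.comul δX) ψ) (tauFront act) :=
  (hact.lTensor.comp preservesComul_tensorTensorTensorComm).comp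
    (preservesComul_assoc.comp Coalgebra.preservesComul_comul.rTensor.rTensor)

end CocommutativeAction

section TensorPower

omit [CharZero k]
variable (A : Type) [Ring A] [Bialgebra k A]

def comulTP : ∀ n : ℕ, TP k A n →ₗ[k] TP k A n ⊗[k] TP k A n
  | 0 => (TensorProduct.lid k k).symm.toLinearMap
  | n + 1 => comulTensor Coalgebra.comul (comulTP n)

variable {k A}

lemma preservesComul_mulAt :
    ∀ (n : ℕ) (i : Fin (n + 1)),
      PreservesComul (comulTP k A (n + 2)) (comulTP k A (n + 1)) (mulAt k A n i)
  | 0, ⟨0, _⟩ => preservesComul_mulFront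
  | n + 1, ⟨0, _⟩ => preservesComul_mulFront
  | n + 1, ⟨j + 1, _⟩ => (preservesComul_mulAt n ⟨j, by omega⟩).lTensor
  | 0, ⟨j + 1, h⟩ => absurd h (by omega)

lemma preservesComul_insertOneAt :
    ∀ (n : ℕ) (i : Fin (n + 1)),
      PreservesComul (comulTP k A (n + 1)) (comulTP k A (n + 2)) (insertOneAt k A n i)
  | 0, ⟨0, _⟩ => preservesComul_mk_one.lTensor
  | n + 1, ⟨0, _⟩ => preservesComul_mk_one.lTensor
  | n + 1, ⟨j + 1, _⟩ => (preservesComul_insertOneAt n ⟨j, by omega⟩).lTensor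
  | 0, ⟨j + 1, h⟩ => absurd h (by omega)

lemma preservesComul_lastSplit :
    ∀ n : ℕ, PreservesComul (comulTP k A (n + 1)) (comulTP k A (n + 1)) (lastSplit k A n)
  | 0 => PreservesComul.id
  | n + 1 => preservesComul_leftComm.comp (preservesComul_lastSplit n).lTensor

lemma omegaTP_comp_TPdiag :
    ∀ n : ℕ, (OmegaTP k A A n).toLinearMap ∘ₗ TPdiag k A Coalgebra.comul n = comulTP k A n
  | 0 => rfl
  | n + 1 => by
    rw [comulTP, ← omegaTP_comp_TPdiag n]
    exact TensorProduct.ext' fun _ _ => rfl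

end TensorPower

section CyclicModule

omit [CharZero k]
variable {k H M}

lemma rhoPreCy_eq_comulTensor (ψ : M →ₗ[k] M ⊗[k] M) (n : ℕ) :
    rhoPreCy k H M ψ n = comulTensor (comulTP k H (n + 1)) ψ := by
  rw [rhoPreCy, ← omegaTP_comp_TPdiag]
  exact TensorProduct.ext' fun _ _ => rfl

lemma preservesComul_degenCy (ψ : M →ₗ[k] M ⊗[k] M) (n : ℕ) (i : Fin (n + 1)) :
    PreservesComul (rhoPreCy k H M ψ n) (rhoPreCy k H M ψ (n + 1)) (degenCy k H M n i) := by
  rw [rhoPreCy_eq_comulTensor, rhoPreCy_eq_comulTensor]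
  exact (preservesComul_insertOneAt n i).rTensor

variable [Coalgebra.IsCocomm k H] {act : H →ₗ[k] M →ₗ[k] M} {ψ : M →ₗ[k] M ⊗[k] M}

lemma preservesComul_tauCy (hact : PreservesComul (comulTensor Coalgebra.comul ψ) ψ (lift act))
    (n : ℕ) :
    PreservesComul (rhoPreCy k H M ψ n) (rhoPreCy k H M ψ n)
      (tauCy k H M Coalgebra.comul act n) := by
  rw [rhoPreCy_eq_comulTensor]
  exact (preservesComul_tauFront hact).comp (preservesComul_lastSplit n).rTensor

lemma preservesComul_faceCy (hact : PreservesComul (comulTensor Coalgebra.comul ψ) ψ (lift act))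
    (n : ℕ) (i : Fin (n + 2)) :
    PreservesComul (rhoPreCy k H M ψ (n + 1)) (rhoPreCy k H M ψ n)
      (faceCy k H M Coalgebra.comul act n i) := by
  have hmul (j : Fin (n + 1)) : PreservesComul (rhoPreCy k H M ψ (n + 1)) (rhoPreCy k H M ψ n)
      (rTensor M (mulAt k H n j)) := by
    rw [rhoPreCy_eq_comulTensor, rhoPreCy_eq_comulTensor]
    exact (preservesComul_mulAt n j).rTensor
  rw [faceCy]
  split_ifs
  · exact hmul _
  · exact (hmul 0).comp (preservesComul_tauCy hact (n + 1))

end CyclicModule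

theorem rho_cyclic_map
    (hcocomm : ∀ h : H, TensorProduct.comm k H H (Coalgebra.comul h) = Coalgebra.comul h)
    (act : H →ₗ[k] M →ₗ[k] M)
    (ψ : M →ₗ[k] M ⊗[k] M)
    (hψ : ∀ (h : H) (m : M),
      ψ (act h m)
        = tensorLAct k H H M M act act (Coalgebra.comul h) (ψ m)) :
    -- `ρ` commutes with all faces (including the last face)
    (∀ (n : ℕ) (i : Fin (n + 2)),
      rhoPreCy k H M ψ n ∘ₗ faceCy k H M (Coalgebra.comul) act n i
        = TensorProduct.map (faceCy k H M (Coalgebra.comul) act n i)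
            (faceCy k H M (Coalgebra.comul) act n i) ∘ₗ rhoPreCy k H M ψ (n + 1))
    -- `ρ` commutes with all degeneracies
    ∧ (∀ (n : ℕ) (i : Fin (n + 1)),
      rhoPreCy k H M ψ (n + 1) ∘ₗ degenCy k H M n i
        = TensorProduct.map (degenCy k H M n i) (degenCy k H M n i)
            ∘ₗ rhoPreCy k H M ψ n)
    -- `ρ` commutes with the cyclic operators
    ∧ (∀ n : ℕ,
      rhoPreCy k H M ψ n ∘ₗ tauCy k H M (Coalgebra.comul) act n
        = TensorProduct.map (tauCy k H M (Coalgebra.comul) act n)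
            (tauCy k H M (Coalgebra.comul) act n) ∘ₗ rhoPreCy k H M ψ n) := by
  have : Coalgebra.IsCocomm k H := ⟨LinearMap.ext hcocomm⟩
  have hact : PreservesComul (comulTensor Coalgebra.comul ψ) ψ (lift act) :=
    TensorProduct.ext' hψ
  exact ⟨preservesComul_faceCy hact, preservesComul_degenCy ψ, preservesComul_tauCy hact⟩
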